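/- Let j : V → V be a nontrivial elementary embedding with critical point κ. If δ > κ is a limit ordinal such that j(δ) = δ, then j(j↾V_δ) = (j↾V_δ)[j↾V_δ], i.e. applying j to the set coding the restriction of j to V_δ yields the application of j↾V_δ to itself. -/

import Mathlib

universe u

noncomputable section

open FirstOrder

/-- The membership relation symbol: a single binary relation. -/
inductive MemRel : ℕ → Type where
  | mem : MemRel 2

/-- The first-order language of set theory: one binary relation symbol, no function symbols. -/
def Lset : Language := ⟨fun _ => Empty, MemRel⟩

/-- The structure `(V, ∈)` on the universe of ZFC sets. -/
instance : Lset.Structure ZFSet.{u} where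
  funMap := fun f _ => f.elim
  RelMap := fun r v => match r with | .mem => v 0 ∈ v 1

/-- For a ZFC set `A`, the structure `(A, ∈)` on its members. -/
instance (A : ZFSet.{u}) : Lset.Structure A.toSet where
  funMap := fun f _ => f.elim
  RelMap := fun r v => match r with | .mem => (v 0 : ZFSet.{u}) ∈ (v 1 : ZFSet.{u})

/-- `j : V → V` is an elementary embedding: it preserves all first-order formulas
in the language of set theory. -/
def IsElem (j : ZFSet.{u} → ZFSet.{u}) : Prop :=
  ∀ (n : ℕ) (φ : Lset.Formula (Fin n)) (a : Fin n → ZFSet.{u}),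
    φ.Realize a ↔ φ.Realize (j ∘ a)

/-- The ordinal corresponding to an element of `o.ToType`. -/
def otypein (o : Ordinal.{u}) (i : o.ToType) : Ordinal.{u} :=
  @Ordinal.typein o.ToType (· < ·) isWellOrder_lt i

theorem otypein_lt_self (o : Ordinal.{u}) (i : o.ToType) : otypein o i < o :=
  Ordinal.typein_lt_self i

/-- The von Neumann ordinal associated to an ordinal. -/
def ordz (o : Ordinal.{u}) : ZFSet.{u} :=
  ZFSet.range.{u,u} fun i : o.ToType => ordz (otypein o i)
termination_by o
decreasing_by exact otypein_lt_self o i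

/-- The cumulative hierarchy: `Vset δ` is the set of all sets of rank `< δ`. -/
def Vset (o : Ordinal.{u}) : ZFSet.{u} :=
  ZFSet.sUnion
    (ZFSet.range.{u,u} fun i : o.ToType =>
      ZFSet.powerset (Vset (otypein o i)))
termination_by o
decreasing_by exact otypein_lt_self o i

/-- Application of a set-coded function (a set of Kuratowski pairs) to an argument. -/
def fval (f x : ZFSet.{u}) : ZFSet.{u} :=
  @dite _ (∃ y, ZFSet.pair x y ∈ f) (Classical.dec _) (fun h => h.choose) (fun _ => ∅)

/-- The critical point of `j : V → V`: the least ordinal `α` with `j α > α`. -/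
def crit (j : ZFSet.{u} → ZFSet.{u}) : Ordinal.{u} :=
  sInf {α | ordz α ∈ j (ordz α)}

/-- The critical sequence of `j`: `κ₀ = crit j`, `κ_{n+1} = j κ_n`. -/
def critSeq (j : ZFSet.{u} → ZFSet.{u}) : ℕ → Ordinal.{u}
  | 0 => crit j
  | n + 1 => (j (ordz (critSeq j n))).rank

/-- `lam j` is the supremum of the critical sequence of `j`. -/
def lam (j : ZFSet.{u} → ZFSet.{u}) : Ordinal.{u} := ⨆ n, critSeq j n

/-- The graph of `f` restricted to `A`, as a set of Kuratowski pairs: `f ↾ A`. -/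
def graphOn (f : ZFSet.{u} → ZFSet.{u}) (A : ZFSet.{u}) : ZFSet.{u} :=
  @ZFSet.map f (Classical.allZFSetDefinable _) A

/-- The restriction of a set-coded function `l` (a set of pairs) to domain `A`: `l ↾ A`. -/
def restrictGraph (l A : ZFSet.{u}) : ZFSet.{u} :=
  ZFSet.sep (fun p => ∃ x ∈ A, ∃ y, p = ZFSet.pair x y) l

/-- The application `k[l] = ⋃_{α<δ} k(l ↾ V_α)` of one set-coded embedding of `V_δ`
to another. -/
def appE (δ : Ordinal.{u}) (k l : ZFSet.{u}) : ZFSet.{u} :=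
  ZFSet.sUnion
    (ZFSet.range.{u,u} fun i : δ.ToType =>
      fval k (restrictGraph l (Vset (otypein δ i))))

/-- `k` is a set coding a nontrivial elementary embedding of `(A, ∈)` into itself:
`k` is the graph of a function `F : A → A` which preserves all first-order formulas
of the language of set theory and is not the identity. -/
def IsNontrivEE (A k : ZFSet.{u}) : Prop :=
  ∃ F : A.toSet → A.toSet,
    (∀ p : ZFSet.{u}, p ∈ k ↔ ∃ x : A.toSet, p = ZFSet.pair x (F x)) ∧
    (∀ (n : ℕ) (φ : Lset.Formula (Fin n)) (a : Fin n → A.toSet),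
      φ.Realize a ↔ φ.Realize (F ∘ a)) ∧
    F ≠ id

/-- `Eset δ` is `E_δ`, the set of all (set-coded) nontrivial elementary embeddings
of `V_δ` into itself. -/
def Eset (δ : Ordinal.{u}) : ZFSet.{u} :=
  ZFSet.sep (fun k => IsNontrivEE (Vset δ) k)
    (ZFSet.powerset (ZFSet.powerset (ZFSet.powerset (Vset δ))))

/-- The critical point of a set-coded embedding: the least ordinal `α` with `k(α) > α`. -/
def critE (k : ZFSet.{u}) : Ordinal.{u} :=
  sInf {α | ordz α ∈ fval k (ordz α)}

/-- The critical sequence of a set-coded embedding `k`, as von Neumann ordinals: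
`γ₀ = crit k` and `γ_{n+1} = k(γ_n)`. -/
def critSeqE (k : ZFSet.{u}) : ℕ → ZFSet.{u}
  | 0 => ordz (critE k)
  | n + 1 => fval k (critSeqE k n)

/-- The iterates of a set-coded embedding: `k₁ = k`, `k_{n+1} = k_n[k_n]`
(here `iterE δ k n` is `k_{n+1}`). -/
def iterE (δ : Ordinal.{u}) (k : ZFSet.{u}) : ℕ → ZFSet.{u}
  | 0 => k
  | n + 1 => appE δ (iterE δ k n) (iterE δ k n)

/-- `I(k) = {k_n : n ≥ 1}`. -/
def Iset (δ : Ordinal.{u}) (k : ZFSet.{u}) : ZFSet.{u} :=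
  ZFSet.range.{u,u} fun n : ULift.{u} ℕ => iterE δ k n.down

/-- `R(k) = {l ∈ E_δ : l[l] = k}`, the set of roots of `k`. -/
def Rset (δ : Ordinal.{u}) (k : ZFSet.{u}) : ZFSet.{u} :=
  ZFSet.sep (fun l => appE δ l l = k) (Eset δ)

/-- `R^γ(k) = {l ∈ R(k) : l(γ) = γ}`. -/
def Rγset (δ : Ordinal.{u}) (γ : Ordinal.{u}) (k : ZFSet.{u}) : ZFSet.{u} :=
  ZFSet.sep (fun l => fval l (ordz γ) = ordz γ) (Rset δ k)

/-- The approximations to `A(k)`: `A₀ = I(k)`, `A_{n+1} = A_n ∪ ⋃_{l ∈ A_n} R(l)`. -/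
def AsetAux (δ : Ordinal.{u}) (k : ZFSet.{u}) : ℕ → ZFSet.{u}
  | 0 => Iset δ k
  | n + 1 => AsetAux δ k n ∪
      ZFSet.sUnion
        (@ZFSet.image (fun l => Rset δ l) (Classical.allZFSetDefinable _) (AsetAux δ k n))

/-- `A(k) = ⋃_n A_n`, the smallest set containing `k` closed under squares and roots. -/
def Aset (δ : Ordinal.{u}) (k : ZFSet.{u}) : ZFSet.{u} :=
  ZFSet.sUnion (ZFSet.range.{u,u} fun n : ULift.{u} ℕ => AsetAux δ k n.down)

/-- `f` restricts to an elementary embedding of `(A, ∈)` into `(B, ∈)`: it maps `A` into `B`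
and preserves all first-order formulas of the language of set theory. -/
def IsElemFun (A B : ZFSet.{u}) (f : ZFSet.{u} → ZFSet.{u}) : Prop :=
  ∃ h : ∀ x ∈ A, f x ∈ B,
    ∀ (n : ℕ) (φ : Lset.Formula (Fin n)) (a : Fin n → A.toSet),
      φ.Realize a ↔ φ.Realize fun i => (⟨f (a i), h _ (a i).2⟩ : B.toSet)

/-- `η` is `(γ, ν, x)`-almost supercompact: there are `ν̄ < η` (with `γ < ν̄`), `x̄ ∈ V_ν̄`
and an elementary embedding `k : V_ν̄ → V_ν` with `k(γ) = γ` and `k(x̄) = x`. -/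
def IsASC (η γ ν : Ordinal.{u}) (x : ZFSet.{u}) : Prop :=
  ∃ nu' : Ordinal.{u}, γ < nu' ∧ nu' < η ∧ ∃ x' ∈ Vset nu', ∃ f : ZFSet.{u} → ZFSet.{u},
    IsElemFun (Vset nu') (Vset ν) f ∧ f (ordz γ) = ordz γ ∧ f x' = x

/-- `η` is `< μ`-almost supercompact. -/
def ASbelow (η μ : Ordinal.{u}) : Prop :=
  ∀ (γ ν : Ordinal.{u}) (x : ZFSet.{u}), γ < η → η < ν → ν < μ → x ∈ Vset ν → IsASC η γ ν x

/-- `η` is almost supercompact. -/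
def IsAlmostSC (η : Ordinal.{u}) : Prop := ∀ μ > η, ASbelow η μ

/-- `X` is a `(j, δ)`-small set: `j(δ) = δ`, `X ⊆ E_δ`, `j ↾ V_δ ∈ j(X)` and for every
`ξ < δ`, `sup {k(ξ) : k ∈ X} < δ`. -/
def IsSmallSet (j : ZFSet.{u} → ZFSet.{u}) (δ : Ordinal.{u}) (X : ZFSet.{u}) : Prop :=
  j (ordz δ) = ordz δ ∧ X ⊆ Eset δ ∧ graphOn j (Vset δ) ∈ j X ∧
    ∀ ξ < δ, ∃ β < δ, ∀ k ∈ X, fval k (ordz ξ) ⊆ ordz β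

/-- `C` is a club in `δ`: a subset of `δ` unbounded in `δ` and closed under suprema of
its bounded nonempty subsets. -/
def IsClubIn (C : Set Ordinal.{u}) (δ : Ordinal.{u}) : Prop :=
  C ⊆ Set.Iio δ ∧ (∀ α < δ, ∃ β ∈ C, α < β) ∧
    ∀ S ⊆ C, S.Nonempty → sSup S < δ → sSup S ∈ C

/-- The application `k[l] = ⋃_{α ∈ Ord} k(l ↾ V_α)` of one elementary embedding of `V` to
another, as a class function: its value at `x` is `k(l ↾ V_{rank x + 1})(x)`. -/
def appC (k l : ZFSet.{u} → ZFSet.{u}) : ZFSet.{u} → ZFSet.{u} := fun x =>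
  fval (k (graphOn l (Vset (x.rank + 1)))) x

/-- The iterates of `j : V → V`: `j₁ = j` and `j_{n+1} = j_n[j_n]`
(here `jIter j n` is `j_{n+1}`). -/
def jIter (j : ZFSet.{u} → ZFSet.{u}) : ℕ → ZFSet.{u} → ZFSet.{u}
  | 0 => j
  | n + 1 => appC (jIter j n) (jIter j n)

/-! ### Auxiliary machinery for Statement 5 -/

section Aux5

open Language

theorem otypein_surj (o : Ordinal.{u}) {γ : Ordinal.{u}} (h : γ < o) :
    ∃ i, otypein o i = γ := by
  obtain ⟨i, hi⟩ := @Ordinal.typein_surj o.ToType (· < ·) isWellOrder_lt γ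
    (by rwa [Ordinal.type_toType])
  exact ⟨i, hi⟩

theorem mem_ordz (o : Ordinal.{u}) (x : ZFSet.{u}) :
    x ∈ ordz o ↔ ∃ γ < o, x = ordz γ := by
  rw [ordz]
  simp only [ZFSet.mem_range, Set.mem_range]
  constructor
  · rintro ⟨i, rfl⟩; exact ⟨_, otypein_lt_self o i, rfl⟩
  · rintro ⟨γ, hγ, rfl⟩
    obtain ⟨i, rfl⟩ := otypein_surj o hγ
    exact ⟨i, rfl⟩

theorem mem_Vset (o : Ordinal.{u}) (x : ZFSet.{u}) :
    x ∈ Vset o ↔ x.rank < o := by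
  induction o using Ordinal.induction generalizing x with
  | h o IH =>
    rw [Vset]
    simp only [ZFSet.mem_sUnion, ZFSet.mem_range, Set.mem_range]
    constructor
    · rintro ⟨z, ⟨i, rfl⟩, hz⟩
      rw [ZFSet.mem_powerset] at hz
      have : x.rank ≤ otypein o i := ZFSet.rank_le_iff.2 fun y hy => by
        rw [← IH _ (otypein_lt_self o i)]; exact hz hy
      exact this.trans_lt (otypein_lt_self o i)
    · intro h
      obtain ⟨i, hi⟩ := otypein_surj o h
      refine ⟨_, ⟨i, rfl⟩, ZFSet.mem_powerset.2 fun y hy => ?_⟩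
      rw [IH _ (otypein_lt_self o i), hi]
      exact ZFSet.rank_lt_of_mem hy

theorem rank_ordz (o : Ordinal.{u}) : (ordz o).rank = o := by
  induction o using Ordinal.induction with
  | h o IH =>
    rw [ordz, ZFSet.rank_range]
    apply le_antisymm
    · apply Ordinal.lsub_le
      intro i
      rw [IH _ (otypein_lt_self o i)]
      exact otypein_lt_self o i
    · by_contra h
      push_neg at h
      obtain ⟨i, hi⟩ := otypein_surj o h
      have := Ordinal.lt_lsub (fun i : o.ToType => (ordz (otypein o i)).rank) i
      rw [hi, IH _ h] at this
      exact this.false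

theorem ordz_mem_ordz {a b : Ordinal.{u}} : ordz a ∈ ordz b ↔ a < b := by
  constructor
  · intro h
    have := ZFSet.rank_lt_of_mem h
    rwa [rank_ordz, rank_ordz] at this
  · intro h
    exact (mem_ordz b _).2 ⟨a, h, rfl⟩

theorem rank_Vset (o : Ordinal.{u}) : (Vset o).rank = o := by
  apply le_antisymm
  · exact ZFSet.rank_le_iff.2 fun y hy => (mem_Vset o y).1 hy
  · refine le_of_forall_lt fun γ hγ => ?_
    have h1 : ordz γ ∈ Vset o := (mem_Vset o _).2 (by rwa [rank_ordz])
    have h2 := ZFSet.rank_lt_of_mem h1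
    rwa [rank_ordz] at h2

theorem Vset_subset_Vset {a b : Ordinal.{u}} (h : a ≤ b) : Vset a ⊆ Vset b := fun z hz =>
  (mem_Vset b z).2 (((mem_Vset a z).1 hz).trans_le h)

theorem Vset_mem_Vset {a b : Ordinal.{u}} : Vset a ∈ Vset b ↔ a < b := by
  rw [mem_Vset, rank_Vset]

/-! #### Basic combinatorics of graphs and values -/

theorem mem_graphOn {f : ZFSet.{u} → ZFSet.{u}} {A p : ZFSet.{u}} :
    p ∈ graphOn f A ↔ ∃ x ∈ A, p = ZFSet.pair x (f x) := by
  rw [graphOn, @ZFSet.mem_map f (Classical.allZFSetDefinable _) A p]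
  simp [eq_comm]

theorem fval_graphOn {f : ZFSet.{u} → ZFSet.{u}} {A x : ZFSet.{u}} (hx : x ∈ A) :
    fval (graphOn f A) x = f x := by
  have hex : ∃ y, ZFSet.pair x y ∈ graphOn f A := ⟨f x, mem_graphOn.2 ⟨x, hx, rfl⟩⟩
  rw [fval, dif_pos hex]
  obtain ⟨x', hx', he⟩ := mem_graphOn.1 hex.choose_spec
  obtain ⟨h1, h2⟩ := ZFSet.pair_injective he
  rw [h2, ← h1]

theorem mem_restrictGraph {l A p : ZFSet.{u}} :
    p ∈ restrictGraph l A ↔ p ∈ l ∧ ∃ x ∈ A, ∃ y, p = ZFSet.pair x y :=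
  ZFSet.mem_sep

theorem restrict_graphOn_Vset {f : ZFSet.{u} → ZFSet.{u}} {a b : Ordinal.{u}} (h : a ≤ b) :
    restrictGraph (graphOn f (Vset b)) (Vset a) = graphOn f (Vset a) := by
  apply ZFSet.ext; intro p
  rw [mem_restrictGraph, mem_graphOn, mem_graphOn]
  constructor
  · rintro ⟨⟨x, hx, rfl⟩, ⟨x', hx', y', he⟩⟩
    obtain ⟨rfl, -⟩ := ZFSet.pair_injective he
    exact ⟨x, hx', rfl⟩
  · rintro ⟨x, hx, rfl⟩
    exact ⟨⟨x, Vset_subset_Vset h hx, rfl⟩, ⟨x, hx, f x, rfl⟩⟩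

theorem mem_appE {δ : Ordinal.{u}} {k l y : ZFSet.{u}} :
    y ∈ appE δ k l ↔ ∃ γ < δ, y ∈ fval k (restrictGraph l (Vset γ)) := by
  rw [appE]
  simp only [ZFSet.mem_sUnion, ZFSet.mem_range, Set.mem_range]
  constructor
  · rintro ⟨z, ⟨i, rfl⟩, hz⟩; exact ⟨_, otypein_lt_self δ i, hz⟩
  · rintro ⟨γ, hγ, hy⟩
    obtain ⟨i, rfl⟩ := otypein_surj δ hγ
    exact ⟨_, ⟨i, rfl⟩, hy⟩

theorem rank_kpair_le (x y : ZFSet.{u}) :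
    (ZFSet.pair x y).rank ≤ Order.succ (Order.succ (max x.rank y.rank)) := by
  rw [ZFSet.pair, ZFSet.rank_pair, ZFSet.rank_singleton]
  apply max_le
  · exact Order.succ_le_succ (Order.succ_le_succ (le_max_left _ _))
  · rw [ZFSet.rank_pair]
    apply Order.succ_le_succ
    exact max_le (Order.succ_le_succ (le_max_left _ _))
      (Order.succ_le_succ (le_max_right _ _))

/-! #### Cycles and von Neumann ordinals -/

theorem no2cycle {a b : ZFSet.{u}} (h1 : a ∈ b) (h2 : b ∈ a) : False :=
  ZFSet.mem_asymm h1 h2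

theorem no3cycle {a b c : ZFSet.{u}} (h1 : a ∈ b) (h2 : b ∈ c) (h3 : c ∈ a) : False := by
  induction a using ZFSet.inductionOn generalizing b c with
  | h a IH => exact IH c h3 h3 h1 h2

def IsTransZ (c : ZFSet.{u}) : Prop := ∀ x ∈ c, ∀ v ∈ x, v ∈ c
def IsLinZ (c : ZFSet.{u}) : Prop := ∀ x ∈ c, ∀ v ∈ c, x ∈ v ∨ v ∈ x ∨ x = v

theorem ordz_isTrans (o : Ordinal.{u}) : IsTransZ (ordz o) := by
  intro x hx y hy
  obtain ⟨γ, hγ, rfl⟩ := (mem_ordz o x).1 hx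
  obtain ⟨γ', hγ', rfl⟩ := (mem_ordz γ y).1 hy
  exact (mem_ordz o _).2 ⟨γ', hγ'.trans hγ, rfl⟩

theorem ordz_isLin (o : Ordinal.{u}) : IsLinZ (ordz o) := by
  intro x hx y hy
  obtain ⟨γ, _, rfl⟩ := (mem_ordz o x).1 hx
  obtain ⟨γ', _, rfl⟩ := (mem_ordz o y).1 hy
  rcases lt_trichotomy γ γ' with h | h | h
  · exact Or.inl (ordz_mem_ordz.2 h)
  · exact Or.inr (Or.inr (by rw [h]))
  · exact Or.inr (Or.inl (ordz_mem_ordz.2 h))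

theorem isOrd_iff {c : ZFSet.{u}} : (IsTransZ c ∧ IsLinZ c) ↔ ∃ γ, c = ordz γ := by
  constructor
  · rintro ⟨htr, hlin⟩
    induction c using ZFSet.inductionOn with
    | h c IH =>
      refine ⟨c.rank, ZFSet.ext fun x => ?_⟩
      rw [mem_ordz]
      constructor
      · intro hx
        have hxsub : x ⊆ c := fun z hz => htr x hx z hz
        have hxtr : IsTransZ x := by
          intro a ha b hb
          have hac : a ∈ c := hxsub ha
          have hbc : b ∈ c := htr a hac b hb
          rcases hlin b hbc x hx with h | h | h
          · exact h
          · exact (no3cycle h hb ha).elim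
          · exact (no2cycle ha (h ▸ hb)).elim
        have hxlin : IsLinZ x := fun a ha b hb => hlin a (hxsub ha) b (hxsub hb)
        obtain ⟨γ, hγ⟩ := IH x hx hxtr hxlin
        exact ⟨γ, by rw [← rank_ordz γ, ← hγ]; exact ZFSet.rank_lt_of_mem hx, hγ⟩
      · rintro ⟨γ, hγ, rfl⟩
        obtain ⟨y, hy, hle⟩ := ZFSet.lt_rank_iff.1 hγ
        have hysub : y ⊆ c := fun z hz => htr y hy z hz
        have hytr : IsTransZ y := by
          intro a ha b hb
          have hac : a ∈ c := hysub ha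
          have hbc : b ∈ c := htr a hac b hb
          rcases hlin b hbc y hy with h | h | h
          · exact h
          · exact (no3cycle h hb ha).elim
          · exact (no2cycle ha (h ▸ hb)).elim
        have hylin : IsLinZ y := fun a ha b hb => hlin a (hysub ha) b (hysub hb)
        obtain ⟨γ', hγ'⟩ := IH y hy hytr hylin
        subst hγ'
        rw [rank_ordz] at hle
        rcases eq_or_lt_of_le hle with rfl | h
        · exact hy
        · exact htr _ hy _ (ordz_mem_ordz.2 h)
  · rintro ⟨γ, rfl⟩
    exact ⟨ordz_isTrans γ, ordz_isLin γ⟩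

/-! #### First-order formulas and their realizations -/

@[simp] lemma relMap_mem (v : Fin 2 → ZFSet.{u}) :
    (Language.Structure.RelMap (L := Lset) (M := ZFSet.{u}) MemRel.mem v) ↔ v 0 ∈ v 1 :=
  Iff.rfl

abbrev memr : Lset.Relations 2 := MemRel.mem

/-- `v₀ ∈ v₁`. -/
def memF : Lset.Formula (Fin 2) :=
  memr.formula₂ (.var 0) (.var 1)

lemma realize_memF (v : Fin 2 → ZFSet.{u}) : memF.Realize v ↔ v 0 ∈ v 1 := by
  simp [memF]

/-- `∀B (B ∈ v₀ → ∀x (x ∈ B ↔ ∃B' (B' ∈ v₀ ∧ B' ∈ B ∧ ∀z (z ∈ x → z ∈ B'))))`. -/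
def recWF : Lset.Formula (Fin 1) :=
  let W0 : Lset.Term (Fin 1 ⊕ Fin 1) := .var (.inl 0)
  let W2 : Lset.Term (Fin 1 ⊕ Fin 3) := .var (.inl 0)
  let inner : Lset.BoundedFormula (Fin 1) 3 :=
    ((memr.boundedFormula₂ (&2) W2) ⊓ (memr.boundedFormula₂ (&2) (&0))) ⊓
      ((memr.boundedFormula₂ (&3) (&1)).imp (memr.boundedFormula₂ (&3) (&2))).all
  ((memr.boundedFormula₂ (&0) W0).imp
    (((memr.boundedFormula₂ (&1) (&0)).iff inner.ex).all)).all

lemma realize_recWF (v : Fin 1 → ZFSet.{u}) :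
    recWF.Realize v ↔
      ∀ B ∈ v 0, ∀ x, (x ∈ B ↔ ∃ B', (B' ∈ v 0 ∧ B' ∈ B) ∧ ∀ z ∈ x, z ∈ B') := by
  simp [recWF, Language.Formula.Realize, Fin.snoc]

/-- the Kuratowski-pair formula `v_{b0} = pair v_{b1} v_{b2}` at bound depth 3. -/
def pairF013 {n : ℕ} : Lset.BoundedFormula (Fin n) 3 :=
  let sing : Lset.BoundedFormula (Fin n) 4 :=
    ((memr.boundedFormula₂ (&4) (&3)).iff (Language.Term.bdEqual (&4) (&1))).all
  let dbl : Lset.BoundedFormula (Fin n) 4 :=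
    ((memr.boundedFormula₂ (&4) (&3)).iff
      ((Language.Term.bdEqual (&4) (&1)) ⊔ (Language.Term.bdEqual (&4) (&2)))).all
  ((memr.boundedFormula₂ (&3) (&0)).iff (sing ⊔ dbl)).all

lemma eq_singleton_char {w x : ZFSet.{u}} :
    (∀ z, z ∈ w ↔ z = x) ↔ w = ({x} : ZFSet.{u}) := by
  constructor
  · intro h; exact ZFSet.ext fun z => by rw [h z, ZFSet.mem_singleton]
  · rintro rfl z; rw [ZFSet.mem_singleton]

lemma eq_doubleton_char {w x y : ZFSet.{u}} :
    (∀ z, z ∈ w ↔ z = x ∨ z = y) ↔ w = ({x, y} : ZFSet.{u}) := by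
  constructor
  · intro h; exact ZFSet.ext fun z => by rw [h z, ZFSet.mem_pair]
  · rintro rfl z; rw [ZFSet.mem_pair]

lemma pair_char {p x y : ZFSet.{u}} :
    (∀ w, w ∈ p ↔ ((∀ z, z ∈ w ↔ z = x) ∨ (∀ z, z ∈ w ↔ z = x ∨ z = y))) ↔
      p = ZFSet.pair x y := by
  simp only [eq_singleton_char, eq_doubleton_char]
  rw [ZFSet.pair]

/-- `∀p (p ∈ v₀ → ∃x (x ∈ v₁ ∧ ∃y, p = pair x y))`. -/
def pairCoverF : Lset.Formula (Fin 2) :=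
  ((memr.boundedFormula₂ (&0) (.var (.inl 0))).imp
    (((memr.boundedFormula₂ (&1) (.var (.inl 1))) ⊓ pairF013.ex).ex)).all

lemma realize_pairCoverF (v : Fin 2 → ZFSet.{u}) :
    pairCoverF.Realize v ↔ ∀ p ∈ v 0, ∃ x ∈ v 1, ∃ y, p = ZFSet.pair x y := by
  have h1 : pairCoverF.Realize v ↔ (∀ p ∈ v 0, ∃ x ∈ v 1, ∃ y, ∀ w, w ∈ p ↔ ((∀ z, z ∈ w ↔ z = x) ∨ (∀ z, z ∈ w ↔ z = x ∨ z = y))) := by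
    simp [pairCoverF, pairF013, Language.Formula.Realize, Fin.snoc,
      show ((3:Fin 4):ℕ) = 3 from rfl, show ((3:Fin 5):ℕ) = 3 from rfl,
      show ((4:Fin 5):ℕ) = 4 from rfl]
  rw [h1]
  simp_rw [pair_char]

/-- `∀p (p ∈ v₀ ↔ (p ∈ v₁ ∧ ∃x (x ∈ v₂ ∧ ∃y, p = pair x y)))`. -/
def restrictCharF : Lset.Formula (Fin 3) :=
  ((memr.boundedFormula₂ (&0) (.var (.inl 0))).iff
    ((memr.boundedFormula₂ (&0) (.var (.inl 1))) ⊓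
      (((memr.boundedFormula₂ (&1) (.var (.inl 2))) ⊓ pairF013.ex).ex))).all

lemma realize_restrictCharF (v : Fin 3 → ZFSet.{u}) :
    restrictCharF.Realize v ↔
      ∀ p, (p ∈ v 0 ↔ p ∈ v 1 ∧ ∃ x ∈ v 2, ∃ y, p = ZFSet.pair x y) := by
  have h1 : restrictCharF.Realize v ↔ (∀ p, (p ∈ v 0 ↔ p ∈ v 1 ∧ ∃ x ∈ v 2, ∃ y, ∀ w, w ∈ p ↔ ((∀ z, z ∈ w ↔ z = x) ∨ (∀ z, z ∈ w ↔ z = x ∨ z = y)))) := by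
    simp [restrictCharF, pairF013, Language.Formula.Realize, Fin.snoc,
      show ((3:Fin 4):ℕ) = 3 from rfl, show ((3:Fin 5):ℕ) = 3 from rfl,
      show ((4:Fin 5):ℕ) = 4 from rfl]
  rw [h1]
  simp_rw [pair_char]

/-- `∀c (c ∈ v₀ ↔ (c ∈ v₁ ∧ c is transitive ∧ c is ∈-linear))`. -/
def ordCharF : Lset.Formula (Fin 2) :=
  let trans : Lset.BoundedFormula (Fin 2) 1 :=
    ((memr.boundedFormula₂ (&1) (&0)).imp
      (((memr.boundedFormula₂ (&2) (&1)).imp (memr.boundedFormula₂ (&2) (&0))).all)).all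
  let lin : Lset.BoundedFormula (Fin 2) 1 :=
    ((memr.boundedFormula₂ (&1) (&0)).imp
      (((memr.boundedFormula₂ (&2) (&0)).imp
        (((memr.boundedFormula₂ (&1) (&2)) ⊔ (memr.boundedFormula₂ (&2) (&1))) ⊔
          (Language.Term.bdEqual (&1) (&2)))).all)).all
  ((memr.boundedFormula₂ (&0) (.var (.inl 0))).iff
    (((memr.boundedFormula₂ (&0) (.var (.inl 1))) ⊓ trans) ⊓ lin)).all

lemma realize_ordCharF (v : Fin 2 → ZFSet.{u}) :
    ordCharF.Realize v ↔
      ∀ c, (c ∈ v 0 ↔ c ∈ v 1 ∧ IsTransZ c ∧ IsLinZ c) := by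
  simp [ordCharF, Language.Formula.Realize, Fin.snoc, IsTransZ, IsLinZ, and_assoc,
    or_assoc]

end Aux5

/-! #### Transport machinery -/

section Transport

lemma jmem {j : ZFSet.{u} → ZFSet.{u}} (hj : IsElem j) {x A : ZFSet.{u}} (h : x ∈ A) :
    j x ∈ j A := by
  have h2 := (hj 2 memF ![x, A]).1 (by rw [realize_memF]; simpa using h)
  rw [realize_memF] at h2
  simpa using h2

/-- The family `{V_γ : γ ≤ δ}` as a ZFC set. -/
def Wfam (δ : Ordinal.{u}) : ZFSet.{u} :=
  insert (Vset δ) (ZFSet.range.{u,u} fun i : δ.ToType => Vset (otypein δ i))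

lemma mem_Wfam {δ : Ordinal.{u}} {C : ZFSet.{u}} : C ∈ Wfam δ ↔ ∃ γ ≤ δ, C = Vset γ := by
  rw [Wfam, ZFSet.mem_insert_iff]
  simp only [ZFSet.mem_range, Set.mem_range]
  constructor
  · rintro (rfl | ⟨i, rfl⟩)
    · exact ⟨δ, le_rfl, rfl⟩
    · exact ⟨_, (otypein_lt_self δ i).le, rfl⟩
  · rintro ⟨γ, hγ, rfl⟩
    rcases eq_or_lt_of_le hγ with rfl | h
    · exact Or.inl rfl
    · obtain ⟨i, rfl⟩ := otypein_surj δ h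
      exact Or.inr ⟨i, rfl⟩

lemma recW_Wfam (δ : Ordinal.{u}) :
    ∀ C ∈ Wfam δ, ∀ x, (x ∈ C ↔ ∃ C', (C' ∈ Wfam δ ∧ C' ∈ C) ∧ ∀ z ∈ x, z ∈ C') := by
  intro C hC x
  obtain ⟨γ, hγ, rfl⟩ := mem_Wfam.1 hC
  constructor
  · intro hx
    have hr : x.rank < γ := (mem_Vset _ _).1 hx
    exact ⟨Vset x.rank, ⟨mem_Wfam.2 ⟨x.rank, (hr.trans_le hγ).le, rfl⟩, Vset_mem_Vset.2 hr⟩,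
      fun z hz => (mem_Vset _ _).2 (ZFSet.rank_lt_of_mem hz)⟩
  · rintro ⟨C', ⟨hC'W, hC'C⟩, hsub⟩
    obtain ⟨γ', _, rfl⟩ := mem_Wfam.1 hC'W
    have h1 : γ' < γ := Vset_mem_Vset.1 hC'C
    have h2 : x.rank ≤ γ' := by
      rw [← rank_Vset γ']
      exact ZFSet.rank_mono fun z hz => hsub z hz
    exact (mem_Vset _ _).2 (h2.trans_lt h1)

lemma jW_members {j : ZFSet.{u} → ZFSet.{u}} (hj : IsElem j) (δ : Ordinal.{u}) :
    ∀ C ∈ j (Wfam δ), ∃ γ, C = Vset γ := by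
  have hV := (hj 1 recWF ![Wfam δ]).1 (by rw [realize_recWF]; simpa using recW_Wfam δ)
  rw [realize_recWF] at hV
  simp only [Function.comp_apply, Matrix.cons_val_zero] at hV
  intro C
  induction C using ZFSet.inductionOn with
  | h C IH =>
    intro hC
    refine ⟨C.rank, ZFSet.ext fun x => ?_⟩
    rw [mem_Vset]
    constructor
    · intro hx
      obtain ⟨C', ⟨hC'W, hC'C⟩, hsub⟩ := (hV C hC x).1 hx
      obtain ⟨γ', rfl⟩ := IH C' hC'C hC'W
      have h1 : x.rank ≤ γ' := by
        rw [← rank_Vset γ']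
        exact ZFSet.rank_mono fun z hz => hsub z hz
      have h2 : γ' < C.rank := by
        have := ZFSet.rank_lt_of_mem hC'C
        rwa [rank_Vset] at this
      exact h1.trans_lt h2
    · intro hx
      obtain ⟨y, hy, hle⟩ := ZFSet.lt_rank_iff.1 hx
      obtain ⟨C', ⟨hC'W, hC'C⟩, hsub⟩ := (hV C hC y).1 hy
      obtain ⟨γ', rfl⟩ := IH C' hC'C hC'W
      have h1 : y.rank ≤ γ' := by
        rw [← rank_Vset γ']
        exact ZFSet.rank_mono fun z hz => hsub z hz
      exact (hV C hC x).2 ⟨Vset γ', ⟨hC'W, hC'C⟩,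
        fun z hz => (mem_Vset _ _).2 ((ZFSet.rank_lt_of_mem hz).trans_le (hle.trans h1))⟩

lemma ordChar_holds (γ : Ordinal.{u}) :
    ∀ c, (c ∈ ordz γ ↔ c ∈ Vset γ ∧ IsTransZ c ∧ IsLinZ c) := by
  intro c
  constructor
  · intro hc
    obtain ⟨ρ, hρ, rfl⟩ := (mem_ordz γ c).1 hc
    exact ⟨(mem_Vset _ _).2 (by rwa [rank_ordz]), ordz_isTrans ρ, ordz_isLin ρ⟩
  · rintro ⟨hcV, ht, hl⟩
    obtain ⟨ρ, rfl⟩ := isOrd_iff.1 ⟨ht, hl⟩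
    have h := (mem_Vset _ _).1 hcV
    rw [rank_ordz] at h
    exact ordz_mem_ordz.2 h

end Transport

/-- If `δ > κ` is a limit ordinal with `j(δ) = δ`, then
`j(j ↾ V_δ) = (j ↾ V_δ)[j ↾ V_δ]`. -/
theorem j_of_restriction (j : ZFSet.{u} → ZFSet.{u}) (hj : IsElem j) (hj' : j ≠ id)
    (δ : Ordinal.{u}) (hgt : crit j < δ) (hlim : Order.IsSuccLimit δ)
    (hfix : j (ordz δ) = ordz δ) :
    j (graphOn j (Vset δ)) = appE δ (graphOn j (Vset δ)) (graphOn j (Vset δ)) := by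
  have hmemJ : ∀ x A : ZFSet.{u}, x ∈ A → j x ∈ j A := fun x A h => jmem hj h
  have hBδ : (j (ordz δ)).rank = δ := by rw [hfix, rank_ordz]
  have hjordz : ∀ γ < δ, j (ordz γ) = ordz ((j (ordz γ)).rank) ∧ (j (ordz γ)).rank < δ := by
    intro γ hγ
    have h1 : j (ordz γ) ∈ ordz δ := by
      rw [← hfix]; exact hmemJ _ _ (ordz_mem_ordz.2 hγ)
    obtain ⟨β, hβ, he⟩ := (mem_ordz δ _).1 h1
    rw [he, rank_ordz]
    exact ⟨rfl, hβ⟩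
  have hjo : ∀ γ ≤ δ, j (ordz γ) = ordz ((j (ordz γ)).rank) := by
    intro γ hγ
    rcases eq_or_lt_of_le hγ with rfl | h
    · rw [hfix, rank_ordz]
    · exact (hjordz γ h).1
  have hle_B : ∀ γ < δ, γ ≤ (j (ordz γ)).rank := by
    intro γ
    induction γ using Ordinal.induction with
    | h γ IH =>
      intro hγ
      refine le_of_forall_lt fun ρ hρ => ?_
      have h1 : j (ordz ρ) ∈ j (ordz γ) := hmemJ _ _ (ordz_mem_ordz.2 hρ)
      rw [(hjordz ρ (hρ.trans hγ)).1, (hjordz γ hγ).1] at h1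
      exact lt_of_le_of_lt (IH ρ hρ (hρ.trans hγ)) (ordz_mem_ordz.1 h1)
  have hordJ : ∀ γ : Ordinal.{u}, ∀ c : ZFSet.{u},
      (c ∈ j (ordz γ) ↔ c ∈ j (Vset γ) ∧ IsTransZ c ∧ IsLinZ c) := by
    intro γ
    have h := (hj 2 ordCharF ![ordz γ, Vset γ]).1
      (by rw [realize_ordCharF]; simpa using ordChar_holds γ)
    rw [realize_ordCharF] at h
    simpa using h
  have hWJ := jW_members hj δ
  have hjV : ∀ γ ≤ δ, j (Vset γ) = Vset ((j (ordz γ)).rank) := by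
    intro γ hγ
    have hmemW : Vset γ ∈ Wfam δ := mem_Wfam.2 ⟨γ, hγ, rfl⟩
    obtain ⟨γ', he⟩ := hWJ _ (hmemJ _ _ hmemW)
    have hiff : ∀ ρ, ρ < (j (ordz γ)).rank ↔ ρ < γ' := by
      intro ρ
      constructor
      · intro h
        have h2 : ordz ρ ∈ j (ordz γ) := by
          rw [hjo γ hγ]; exact ordz_mem_ordz.2 h
        have h3 := ((hordJ γ (ordz ρ)).1 h2).1
        rw [he, mem_Vset, rank_ordz] at h3
        exact h3
      · intro h
        have h2 : ordz ρ ∈ j (Vset γ) := by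
          rw [he, mem_Vset, rank_ordz]; exact h
        have h3 := (hordJ γ (ordz ρ)).2 ⟨h2, ordz_isTrans ρ, ordz_isLin ρ⟩
        rw [hjo γ hγ] at h3
        exact ordz_mem_ordz.1 h3
    have heq : γ' = (j (ordz γ)).rank :=
      le_antisymm (le_of_forall_lt fun ρ h => (hiff ρ).2 h)
        (le_of_forall_lt fun ρ h => (hiff ρ).1 h)
    rw [he, heq]
  have hjVδ : j (Vset δ) = Vset δ := by rw [hjV δ le_rfl, hBδ]
  -- restriction characterization, in V and transported
  have hGsub : ∀ γ ≤ δ, ∀ p : ZFSet.{u},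
      (p ∈ graphOn j (Vset γ) ↔
        p ∈ graphOn j (Vset δ) ∧ ∃ x ∈ Vset γ, ∃ y, p = ZFSet.pair x y) := by
    intro γ hγ p
    rw [← restrict_graphOn_Vset (f := j) hγ, mem_restrictGraph]
  have hGJ : ∀ γ < δ, ∀ p : ZFSet.{u},
      (p ∈ j (graphOn j (Vset γ)) ↔
        p ∈ j (graphOn j (Vset δ)) ∧
          ∃ x ∈ Vset ((j (ordz γ)).rank), ∃ y, p = ZFSet.pair x y) := by
    intro γ hγ
    have h := (hj 3 restrictCharF ![graphOn j (Vset γ), graphOn j (Vset δ), Vset γ]).1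
      (by rw [realize_restrictCharF]; simpa using hGsub γ hγ.le)
    rw [realize_restrictCharF] at h
    simpa [hjV γ hγ.le] using h
  -- pair covering, in V and transported
  have hPCV : ∀ p ∈ graphOn j (Vset δ), ∃ x ∈ Vset δ, ∃ y, p = ZFSet.pair x y := by
    intro p hp
    obtain ⟨x, hx, rfl⟩ := mem_graphOn.1 hp
    exact ⟨x, hx, j x, rfl⟩
  have hPCJ : ∀ p ∈ j (graphOn j (Vset δ)), ∃ x ∈ Vset δ, ∃ y, p = ZFSet.pair x y := by
    have h := (hj 2 pairCoverF ![graphOn j (Vset δ), Vset δ]).1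
      (by rw [realize_pairCoverF]; simpa using hPCV)
    rw [realize_pairCoverF] at h
    simpa [hjVδ] using h
  -- each restricted graph is a member of V_δ
  have hGmem : ∀ γ < δ, graphOn j (Vset γ) ∈ Vset δ := by
    intro γ hγ
    rw [mem_Vset]
    have hmδ : max γ ((j (ordz γ)).rank) < δ := max_lt hγ (hjordz γ hγ).2
    have hbound : (graphOn j (Vset γ)).rank ≤
        Order.succ (Order.succ (Order.succ (max γ ((j (ordz γ)).rank)))) := by
      apply ZFSet.rank_le_iff.2
      intro p hp
      obtain ⟨x, hx, rfl⟩ := mem_graphOn.1 hp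
      have h1 : x.rank < γ := (mem_Vset _ _).1 hx
      have h2 : (j x).rank < (j (ordz γ)).rank := by
        have h3 : j x ∈ Vset ((j (ordz γ)).rank) := by
          rw [← hjV γ hγ.le]; exact hmemJ _ _ hx
        exact (mem_Vset _ _).1 h3
      have h4 : max x.rank (j x).rank ≤ max γ ((j (ordz γ)).rank) :=
        max_le (h1.le.trans (le_max_left _ _)) (h2.le.trans (le_max_right _ _))
      calc (ZFSet.pair x (j x)).rank
          ≤ Order.succ (Order.succ (max x.rank (j x).rank)) := rank_kpair_le _ _
        _ ≤ Order.succ (Order.succ (max γ ((j (ordz γ)).rank))) :=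
            Order.succ_le_succ (Order.succ_le_succ h4)
        _ < Order.succ (Order.succ (Order.succ (max γ ((j (ordz γ)).rank)))) :=
            Order.lt_succ _
    exact hbound.trans_lt (hlim.succ_lt (hlim.succ_lt (hlim.succ_lt hmδ)))
  -- final extensionality argument
  apply ZFSet.ext
  intro y
  rw [mem_appE]
  constructor
  · intro hy
    obtain ⟨x, hxV, y', rfl⟩ := hPCJ y hy
    have hα : Order.succ x.rank < δ := hlim.succ_lt ((mem_Vset _ _).1 hxV)
    refine ⟨Order.succ x.rank, hα, ?_⟩
    rw [restrict_graphOn_Vset hα.le, fval_graphOn (hGmem _ hα)]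
    refine (hGJ _ hα _).2 ⟨hy, x, ?_, y', rfl⟩
    rw [mem_Vset]
    exact lt_of_lt_of_le (Order.lt_succ _) (hle_B _ hα)
  · rintro ⟨γ, hγ, hy⟩
    rw [restrict_graphOn_Vset hγ.le, fval_graphOn (hGmem _ hγ)] at hy
    exact ((hGJ _ hγ _).1 hy).1
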